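/- Under assumption (A1), for every almost surely finite (F_t)-stopping time S one has E(N_S) ≤ (Id−K)^{-1} μ · E(S) componentwise, where (Id−K)^{-1}μ is identified with a column vector in ℝ^d. -/

import Mathlib

/-!
Stopping `S` at `σₙ = min S ρₙ`, where `ρₙ` is the time at which the total count reaches
`n + 1` (capped at `n + 1`), makes every `N_{j,σₙ}` bounded by `n + 2`, since jumps have size one.
Optional sampling for the right-continuous martingale `M` (along discretised stopping times,
whose values are uniformly integrable conditional expectations) gives
`E N_{i,σ} = E ∫_0^σ λ_i`, and Tonelli bounds `∫_0^σ λ_i ≤ μ_i σ + Σ_j K_ij N_{j,σ}` pathwise.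
So `x = E N_σ` satisfies `x ≤ E(σ) μ + K x`. As `K ≥ 0` has spectral radius `< 1`, the
Neumann series gives `(1 - K)⁻¹ = Σ Kᵏ ≥ 0`, hence `x ≤ (1 - K)⁻¹ μ E(σ) ≤ (1 - K)⁻¹ μ E(S)`,
and Fatou's lemma lets `n → ∞`.
-/

open MeasureTheory Set Filter Topology

noncomputable section

/-- The data of a `d`-dimensional counting process `N` (with right-continuous,
nondecreasing, `ℕ`-valued paths started at `0`, all jumps of size one and no two
components jumping at the same time), adapted to a filtration `F`, together with
baseline intensities `μ` and nonnegative measurable excitation kernels `φ`. -/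
structure HawkesData (d : ℕ) (Ω : Type*) [mΩ : MeasurableSpace Ω] where
  P : Measure Ω
  isProb : IsProbabilityMeasure P
  F : Filtration ℝ mΩ
  μ : Fin d → ℝ
  μ_nonneg : ∀ i, 0 ≤ μ i
  φ : Fin d → Fin d → ℝ → ℝ
  φ_meas : ∀ i j, Measurable (φ i j)
  φ_nonneg : ∀ i j t, 0 ≤ φ i j t
  /-- the paths, as right-continuous nondecreasing functions -/
  N : Fin d → Ω → StieltjesFunction ℝ
  N_zero : ∀ i ω, ∀ t ≤ (0 : ℝ), N i ω t = 0
  N_nat : ∀ i ω t, ∃ n : ℕ, N i ω t = n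
  jump_le_one : ∀ i ω t, (N i ω).measure {t} ≤ 1
  no_common_jump : ∀ i j ω t, i ≠ j → (N i ω).measure {t} = 0 ∨ (N j ω).measure {t} = 0
  adapted : ∀ i, Adapted F fun t ω => N i ω t

namespace HawkesData

variable {d : ℕ} {Ω : Type*} [mΩ : MeasurableSpace Ω]

/-- The Hawkes stochastic intensity `λ_{i,t} = μ_i + Σ_j ∫_{(0,t)} φ_{ij}(t-s) dN_{j,s}`. -/
def lam (H : HawkesData d Ω) (i : Fin d) (t : ℝ) (ω : Ω) : ℝ :=
  H.μ i + ∑ j, ∫ s in Ioo (0 : ℝ) t, H.φ i j (t - s) ∂(H.N j ω).measure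

/-- The compensated process `M_{i,t} = N_{i,t} - ∫_0^t λ_{i,s} ds`. -/
def M (H : HawkesData d Ω) (i : Fin d) (t : ℝ) (ω : Ω) : ℝ :=
  H.N i ω t - ∫ s in Ioc (0 : ℝ) t, H.lam i s ω

/-- `N` is a Hawkes process with parameters `(μ, φ)` when each compensated
coordinate is a martingale. -/
def IsHawkes (H : HawkesData d Ω) : Prop := ∀ i, Martingale (H.M i) H.F H.P

/-- The matrix `K = ∫_0^∞ φ(t) dt`. -/
def K (H : HawkesData d Ω) : Matrix (Fin d) (Fin d) ℝ :=
  Matrix.of fun i j => ∫ t in Ioi (0 : ℝ), H.φ i j t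

/-- Assumption (A1): the kernels are integrable and the spectral radius of `K`
is strictly less than one. -/
def A1 (H : HawkesData d Ω) : Prop :=
  (∀ i j, IntegrableOn (H.φ i j) (Ioi 0)) ∧
    spectralRadius ℂ ((H.K).map fun x : ℝ => (x : ℂ)) < 1

/-- `H.phiIter n` is the `(n+1)`-fold convolution `φ_{n+1}` of the kernel matrix. -/
def phiIter (H : HawkesData d Ω) : ℕ → Fin d → Fin d → ℝ → ℝ
  | 0 => H.φ
  | n + 1 => fun i j t => ∑ k, ∫ s in Ioc (0 : ℝ) t, H.φ i k (t - s) * H.phiIter n k j s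

/-- `ψ = Σ_{n ≥ 1} φ_n`. -/
def psi (H : HawkesData d Ω) (i j : Fin d) (t : ℝ) : ℝ := ∑' n, H.phiIter n i j t

/-- The expectation `E(N_{i,t})`. -/
def ENt (H : HawkesData d Ω) (i : Fin d) (t : ℝ) : ℝ := ∫ ω, H.N i ω t ∂H.P

/-- `Γ = (Id - K)⁻¹`. -/
def Gam (H : HawkesData d Ω) : Matrix (Fin d) (Fin d) ℝ := (1 - H.K)⁻¹

/-- The diagonal matrix `Σ` with `Σ_{ii} = ((Id - K)⁻¹ μ)_i`. -/
def Sig (H : HawkesData d Ω) : Matrix (Fin d) (Fin d) ℝ :=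
  Matrix.diagonal fun i => H.Gam.mulVec H.μ i

end HawkesData

open scoped ENNReal Matrix

section NeumannSeries

attribute [local instance] Matrix.linftyOpNormedRing Matrix.linftyOpNormedAlgebra

theorem summable_norm_pow_of_spectralRadius_lt_one {A : Type*} [NormedRing A]
    [NormedAlgebra ℂ A] [CompleteSpace A] {a : A} (ha : spectralRadius ℂ a < 1) :
    Summable fun n => ‖a ^ n‖ := by
  obtain ⟨r, hρr, hr1⟩ := exists_between ha
  have hr : r ≠ ∞ := hr1.ne_top
  have hgelfand : ∀ᶠ n : ℕ in atTop,
      ENNReal.ofReal (‖a ^ n‖ ^ (1 / n : ℝ)) < ENNReal.ofReal r.toReal :=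
    (spectrum.pow_norm_pow_one_div_tendsto_nhds_spectralRadius a).eventually_lt_const
      (by rwa [ENNReal.ofReal_toReal hr])
  have hbound : ∀ᶠ n : ℕ in atTop, ‖‖a ^ n‖‖ ≤ r.toReal ^ n := by
    filter_upwards [hgelfand, eventually_gt_atTop 0] with n hn hn0
    rw [ENNReal.ofReal_lt_ofReal_iff_of_nonneg (by positivity), one_div,
      Real.rpow_inv_lt_iff_of_pos (norm_nonneg _) ENNReal.toReal_nonneg (by positivity),
      Real.rpow_natCast] at hn
    rw [norm_norm]
    exact hn.le
  exact Summable.of_norm_bounded_eventually_nat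
    (summable_geometric_of_lt_one ENNReal.toReal_nonneg (ENNReal.toReal_lt_of_lt_ofReal
      (by simpa using hr1))) hbound

variable {n : Type*} [Fintype n] [DecidableEq n]

theorem Matrix.linfty_opNorm_map_ofReal (K : Matrix n n ℝ) :
    ‖K.map ((↑) : ℝ → ℂ)‖ = ‖K‖ := by
  simp [Matrix.linfty_opNorm_def]

theorem Matrix.hasSum_pow_inv_one_sub {K : Matrix n n ℝ}
    (hK : spectralRadius ℂ (K.map ((↑) : ℝ → ℂ)) < 1) :
    HasSum (fun k => K ^ k) (1 - K)⁻¹ := by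
  have hs : Summable fun k => K ^ k := by
    refine Summable.of_norm ?_
    have hpow : ∀ k, K.map ((↑) : ℝ → ℂ) ^ k = (K ^ k).map (↑) := fun k =>
      (map_pow Complex.ofRealHom.mapMatrix K k).symm
    simpa only [hpow, Matrix.linfty_opNorm_map_ofReal] using
      summable_norm_pow_of_spectralRadius_lt_one hK
  rw [Matrix.inv_eq_left_inv hs.tsum_pow_mul_one_sub]
  exact hs.hasSum

theorem Matrix.inv_one_sub_apply_nonneg {K : Matrix n n ℝ} (hK0 : ∀ i j, 0 ≤ K i j)
    (hK : spectralRadius ℂ (K.map ((↑) : ℝ → ℂ)) < 1) (i j : n) : 0 ≤ (1 - K)⁻¹ i j :=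
  (Pi.hasSum.mp (Pi.hasSum.mp (Matrix.hasSum_pow_inv_one_sub hK) i) j).nonneg
    fun k => Matrix.pow_apply_nonneg hK0 k i j

theorem Matrix.le_inv_one_sub_mulVec {K : Matrix n n ℝ} (hK0 : ∀ i j, 0 ≤ K i j)
    (hK : spectralRadius ℂ (K.map ((↑) : ℝ → ℂ)) < 1) {x a : n → ℝ} (h : x ≤ a + K *ᵥ x) :
    x ≤ (1 - K)⁻¹ *ᵥ a := by
  have hinv : (1 - K)⁻¹ * (1 - K) = 1 :=
    Matrix.nonsing_inv_mul _ (Matrix.isUnit_det_of_left_inverse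
      (Matrix.hasSum_pow_inv_one_sub hK).summable.tsum_pow_mul_one_sub)
  have hr : 0 ≤ a - (1 - K) *ᵥ x := by
    rw [Matrix.sub_mulVec, Matrix.one_mulVec]
    intro i
    simpa using sub_nonneg.mpr (h i)
  have ha : (1 - K)⁻¹ *ᵥ a = x + (1 - K)⁻¹ *ᵥ (a - (1 - K) *ᵥ x) := by
    rw [Matrix.mulVec_sub, Matrix.mulVec_mulVec, hinv, Matrix.one_mulVec, add_sub_cancel]
  rw [ha]
  refine le_add_of_nonneg_right fun i => Finset.sum_nonneg fun j _ => ?_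
  exact mul_nonneg (Matrix.inv_one_sub_apply_nonneg hK0 hK i j) (hr j)

end NeumannSeries

section Convolution

variable {ν : Measure ℝ} [SFinite ν] {f : ℝ → ℝ≥0∞}

theorem measurable_lintegral_Ioo_sub (hf : Measurable f) :
    Measurable fun s => ∫⁻ u in Ioo 0 s, f (s - u) ∂ν := by
  have hset : MeasurableSet {p : ℝ × ℝ | p.2 ∈ Ioo 0 p.1} :=
    (measurableSet_lt measurable_const measurable_snd).inter
      (measurableSet_lt measurable_snd measurable_fst)
  have hF : Measurable ({p : ℝ × ℝ | p.2 ∈ Ioo 0 p.1}.indicator fun p => f (p.1 - p.2)) :=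
    (hf.comp (measurable_fst.sub measurable_snd)).indicator hset
  convert hF.lintegral_prod_right' (ν := ν) using 2 with s
  rw [← lintegral_indicator measurableSet_Ioo]
  rfl

theorem lintegral_Ioc_lintegral_Ioo_sub_le (hf : Measurable f) (b : ℝ) :
    ∫⁻ s in Ioc 0 b, ∫⁻ u in Ioo 0 s, f (s - u) ∂ν ≤ (∫⁻ t in Ioi 0, f t) * ν (Ioo 0 b) := by
  set g : ℝ → ℝ≥0∞ := (Ioi 0).indicator f
  have hg : Measurable g := hf.indicator measurableSet_Ioi
  calc ∫⁻ s in Ioc 0 b, ∫⁻ u in Ioo 0 s, f (s - u) ∂ν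
      ≤ ∫⁻ s, ∫⁻ u in Ioo 0 b, g (s - u) ∂ν := by
        refine (setLIntegral_le_lintegral _ _).trans' (setLIntegral_mono' measurableSet_Ioc
          fun s hs => ?_)
        calc ∫⁻ u in Ioo 0 s, f (s - u) ∂ν = ∫⁻ u in Ioo 0 s, g (s - u) ∂ν :=
              setLIntegral_congr_fun measurableSet_Ioo fun u hu =>
                (indicator_of_mem (sub_pos.mpr hu.2) f).symm
          _ ≤ ∫⁻ u in Ioo 0 b, g (s - u) ∂ν :=
              lintegral_mono_set (Ioo_subset_Ioo_right hs.2)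
    _ = ∫⁻ u in Ioo 0 b, (∫⁻ s, g (s - u)) ∂ν :=
        lintegral_lintegral_swap ((hg.comp (measurable_fst.sub measurable_snd)).aemeasurable)
    _ = (∫⁻ t in Ioi 0, f t) * ν (Ioo 0 b) := by
        simp_rw [lintegral_sub_right_eq_self, g, lintegral_indicator measurableSet_Ioi,
          setLIntegral_const]

end Convolution

theorem MeasureTheory.lintegral_le_of_tendsto {α : Type*} [MeasurableSpace α] {μ : Measure α}
    {f : ℕ → α → ℝ≥0∞} {g : α → ℝ≥0∞} {c : ℝ≥0∞} (hf : ∀ n, AEMeasurable (f n) μ)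
    (hlim : ∀ᵐ x ∂μ, Tendsto (f · x) atTop (𝓝 (g x))) (hc : ∀ n, ∫⁻ x, f n x ∂μ ≤ c) :
    ∫⁻ x, g x ∂μ ≤ c :=
  calc ∫⁻ x, g x ∂μ = ∫⁻ x, liminf (f · x) atTop ∂μ :=
        lintegral_congr_ae (hlim.mono fun _ hx => hx.liminf_eq.symm)
    _ ≤ liminf (fun n => ∫⁻ x, f n x ∂μ) atTop := lintegral_liminf_le' hf
    _ ≤ c := liminf_le_of_frequently_le' (Frequently.of_forall hc)

theorem StieltjesFunction.le_add_toReal_measure_singleton (F : StieltjesFunction ℝ) {a c : ℝ}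
    (h : ∀ s < a, F s ≤ c) : F a ≤ c + (F.measure {a}).toReal := by
  have hleft : Function.leftLim F a ≤ c :=
    le_of_tendsto (F.mono.tendsto_leftLim a) (eventually_nhdsWithin_of_forall h)
  rw [F.measure_singleton, ENNReal.toReal_ofReal (sub_nonneg.mpr (F.mono.leftLim_le le_rfl))]
  linarith

section RightContinuousProcess

variable {Ω β : Type*} {mΩ : MeasurableSpace Ω}

def gridCeil (q : ℕ) (x : ℝ) : ℝ := ⌈x * (q + 1)⌉ / (q + 1)

theorem gridCeil_le_iff {q : ℕ} {x t : ℝ} :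
    gridCeil q x ≤ t ↔ x ≤ ⌊t * (q + 1)⌋ / (q + 1) := by
  rw [gridCeil, div_le_iff₀ (by positivity), le_div_iff₀ (by positivity), ← Int.le_floor,
    Int.ceil_le]

theorem le_gridCeil (q : ℕ) (x : ℝ) : x ≤ gridCeil q x :=
  (le_div_iff₀ (by positivity)).mpr (Int.le_ceil _)

theorem gridCeil_le_add (q : ℕ) (x : ℝ) : gridCeil q x ≤ x + 1 / (q + 1) := by
  rw [gridCeil, div_le_iff₀ (by positivity), add_mul, one_div_mul_cancel (by positivity)]
  exact (Int.ceil_lt_add_one _).le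

theorem tendsto_gridCeil (x : ℝ) :
    Tendsto (fun q : ℕ => gridCeil q x) atTop (𝓝[≥] x) := by
  refine tendsto_nhdsWithin_iff.mpr ⟨?_, Eventually.of_forall fun q => le_gridCeil q x⟩
  refine tendsto_of_tendsto_of_tendsto_of_le_of_le tendsto_const_nhds ?_ (le_gridCeil · x)
    (gridCeil_le_add · x)
  simpa using tendsto_const_nhds.add (tendsto_one_div_add_atTop_nhds_zero_nat (𝕜 := ℝ))

theorem MeasureTheory.IsStoppingTime.measurable_real {F : Filtration ℝ mΩ} {τ : Ω → ℝ}
    (hτ : IsStoppingTime F fun ω => (τ ω : WithTop ℝ)) : Measurable τ :=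
  measurable_of_Iic fun t => by
    have := F.le t _ (hτ t)
    simp only [WithTop.coe_le_coe] at this
    exact this

theorem MeasureTheory.IsStoppingTime.gridCeil {F : Filtration ℝ mΩ} {τ : Ω → ℝ}
    (hτ : IsStoppingTime F fun ω => (τ ω : WithTop ℝ)) (q : ℕ) :
    IsStoppingTime F fun ω => (gridCeil q (τ ω) : WithTop ℝ) := by
  intro t
  simp only [WithTop.coe_le_coe, gridCeil_le_iff]
  refine F.mono ?_ _ (by simpa using hτ (⌊t * (q + 1)⌋ / (q + 1)))
  rw [div_le_iff₀ (by positivity)]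
  exact Int.floor_le _

theorem measurable_gridCeil_comp {X : ℝ → Ω → β} [MeasurableSpace β]
    (hX : ∀ t, Measurable (X t)) {τ : Ω → ℝ} (hτ : Measurable τ) (q : ℕ) :
    Measurable fun ω => X (gridCeil q (τ ω)) ω := by
  have hceil : Measurable fun ω => ⌈τ ω * (q + 1)⌉ := (hτ.mul_const _).ceil
  exact (measurable_from_prod_countable_right (f := fun p : ℤ × Ω => X (p.1 / (q + 1)) p.2)
    fun k => hX ((k : ℝ) / (q + 1))).comp (hceil.prodMk measurable_id)

theorem measurable_comp_of_continuousWithinAt [TopologicalSpace β]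
    [TopologicalSpace.PseudoMetrizableSpace β] [MeasurableSpace β] [BorelSpace β]
    {X : ℝ → Ω → β} (hX : ∀ t, Measurable (X t))
    (hrc : ∀ ω t, ContinuousWithinAt (X · ω) (Ici t) t) {τ : Ω → ℝ} (hτ : Measurable τ) :
    Measurable fun ω => X (τ ω) ω :=
  measurable_of_tendsto_metrizable (measurable_gridCeil_comp hX hτ) <|
    tendsto_pi_nhds.mpr fun ω => (hrc ω (τ ω)).tendsto.comp (tendsto_gridCeil (τ ω))

end RightContinuousProcess

section OptionalSampling

variable {Ω : Type*} {mΩ : MeasurableSpace Ω} {F : Filtration ℝ mΩ} {P : Measure Ω}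

theorem MeasureTheory.Martingale.integrable_comp_and_integral_comp_eq [IsFiniteMeasure P]
    {M : ℝ → Ω → ℝ} (hM : Martingale M F P)
    (hrc : ∀ ω t, ContinuousWithinAt (M · ω) (Ici t) t) {τ : Ω → ℝ}
    (hτ : IsStoppingTime F fun ω => (τ ω : WithTop ℝ)) {B : ℝ} (hτB : ∀ ω, τ ω ≤ B) :
    Integrable (fun ω => M (τ ω) ω) P ∧ ∫ ω, M (τ ω) ω ∂P = ∫ ω, M B ω ∂P := by
  have hle : ∀ q ω, ((gridCeil q (τ ω) : ℝ) : WithTop ℝ) ≤ ((B + 1 : ℝ) : WithTop ℝ) :=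
    fun q ω => WithTop.coe_le_coe.mpr <| (gridCeil_le_add q (τ ω)).trans <|
      add_le_add (hτB ω) ((div_le_one (by positivity)).mpr (by simp))
  have hcountable : ∀ q, (range fun ω => ((gridCeil q (τ ω) : ℝ) : WithTop ℝ)).Countable :=
    fun q => (countable_range fun k : ℤ => ((k / (q + 1) : ℝ) : WithTop ℝ)).mono <| by
      rintro _ ⟨ω, rfl⟩
      exact ⟨_, rfl⟩
  have hsample : ∀ q, (fun ω => M (gridCeil q (τ ω)) ω)
      =ᵐ[P] P[M (B + 1) | (hτ.gridCeil q).measurableSpace] := fun q =>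
    hM.stoppedValue_ae_eq_condExp_of_le_const_of_countable_range (hτ.gridCeil q) (hle q)
      (hcountable q)
  have hUI : UniformIntegrable (fun q ω => M (gridCeil q (τ ω)) ω) 1 P :=
    ((hM.integrable (B + 1)).uniformIntegrable_condExp fun q =>
      (hτ.gridCeil q).measurableSpace_le_of_le (hle q)).ae_eq fun q => (hsample q).symm
  have hlim : ∀ᵐ ω ∂P, Tendsto (fun q => M (gridCeil q (τ ω)) ω) atTop (𝓝 (M (τ ω) ω)) :=
    ae_of_all _ fun ω => (hrc ω (τ ω)).tendsto.comp (tendsto_gridCeil (τ ω))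
  have hint : Integrable (fun ω => M (τ ω) ω) P := hUI.integrable_of_ae_tendsto hlim
  refine ⟨hint, tendsto_nhds_unique (tendsto_integral_of_L1' _ hint.1
    (Eventually.of_forall fun q => (hUI.memLp q).integrable le_rfl)
    (tendsto_Lp_finite_of_tendsto_ae le_rfl ENNReal.one_ne_top hUI.1
      (memLp_one_iff_integrable.mpr hint) hUI.2.1 hlim)) ?_⟩
  have hB : ∫ ω, M (B + 1) ω ∂P = ∫ ω, M B ω ∂P := by
    rw [← integral_condExp (F.le B)]
    exact integral_congr_ae (hM.2 B (B + 1) (by linarith))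
  refine tendsto_const_nhds.congr fun q => ?_
  rw [integral_congr_ae (hsample q),
    integral_condExp ((hτ.gridCeil q).measurableSpace_le_of_le (hle q)), hB]

end OptionalSampling

namespace HawkesData

variable {d : ℕ} {Ω : Type*} [MeasurableSpace Ω] (H : HawkesData d Ω)

section Pathwise

theorem N_nonneg (i : Fin d) (ω : Ω) (t : ℝ) : 0 ≤ H.N i ω t := by
  rcases le_total t 0 with ht | ht
  · rw [H.N_zero i ω t ht]
  · exact H.N_zero i ω 0 le_rfl ▸ (H.N i ω).mono ht

theorem K_nonneg (i j : Fin d) : 0 ≤ H.K i j :=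
  integral_nonneg fun t => H.φ_nonneg i j t

theorem lam_eq (i : Fin d) (t : ℝ) (ω : Ω) :
    H.lam i t ω = H.μ i + ∑ j,
      (∫⁻ u in Ioo 0 t, ENNReal.ofReal (H.φ i j (t - u)) ∂(H.N j ω).measure).toReal := by
  refine congrArg (H.μ i + ·) (Finset.sum_congr rfl fun j _ => ?_)
  exact integral_eq_lintegral_of_nonneg_ae (Eventually.of_forall fun _ => H.φ_nonneg i j _)
    ((H.φ_meas i j).comp (measurable_const.sub measurable_id)).aestronglyMeasurable

theorem measurable_lam (i : Fin d) (ω : Ω) : Measurable fun t => H.lam i t ω := by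
  simp_rw [lam_eq]
  exact measurable_const.add <| Finset.measurable_sum _ fun j _ =>
    (measurable_lintegral_Ioo_sub (H.φ_meas i j).ennreal_ofReal).ennreal_toReal

theorem lintegral_lam_le (hφ : ∀ i j, IntegrableOn (H.φ i j) (Ioi 0)) (i : Fin d) (ω : Ω)
    (b : ℝ) : ∫⁻ t in Ioc 0 b, ENNReal.ofReal (H.lam i t ω) ≤
      ENNReal.ofReal (H.μ i) * ENNReal.ofReal b +
        ∑ j, ENNReal.ofReal (H.K i j) * ENNReal.ofReal (H.N j ω b) := by
  set G : Fin d → ℝ → ℝ≥0∞ := fun j t =>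
    ∫⁻ u in Ioo 0 t, ENNReal.ofReal (H.φ i j (t - u)) ∂(H.N j ω).measure
  have hlam : ∀ t, ENNReal.ofReal (H.lam i t ω) ≤ ENNReal.ofReal (H.μ i) + ∑ j, G j t := by
    intro t
    rw [lam_eq]
    refine ENNReal.ofReal_add_le.trans (add_le_add le_rfl ?_)
    rw [ENNReal.ofReal_sum_of_nonneg fun j _ => ENNReal.toReal_nonneg]
    exact Finset.sum_le_sum fun j _ => ENNReal.ofReal_toReal_le
  have hK : ∀ j, ∫⁻ t in Ioi 0, ENNReal.ofReal (H.φ i j t) = ENNReal.ofReal (H.K i j) :=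
    fun j => (ofReal_integral_eq_lintegral_ofReal (hφ i j)
      (Eventually.of_forall (H.φ_nonneg i j))).symm
  have hN : ∀ j, (H.N j ω).measure (Ioo 0 b) ≤ ENNReal.ofReal (H.N j ω b) := fun j =>
    calc (H.N j ω).measure (Ioo 0 b) ≤ (H.N j ω).measure (Ioc 0 b) :=
          measure_mono Ioo_subset_Ioc_self
      _ = ENNReal.ofReal (H.N j ω b) := by
          rw [StieltjesFunction.measure_Ioc, H.N_zero j ω 0 le_rfl, sub_zero]
  calc ∫⁻ t in Ioc 0 b, ENNReal.ofReal (H.lam i t ω)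
      ≤ ∫⁻ t in Ioc 0 b, (ENNReal.ofReal (H.μ i) + ∑ j, G j t) := lintegral_mono hlam
    _ = ENNReal.ofReal (H.μ i) * ENNReal.ofReal b + ∑ j, ∫⁻ t in Ioc 0 b, G j t := by
        rw [lintegral_add_left measurable_const, setLIntegral_const, Real.volume_Ioc, sub_zero,
          lintegral_finsetSum _ fun j _ =>
            measurable_lintegral_Ioo_sub (H.φ_meas i j).ennreal_ofReal]
    _ ≤ ENNReal.ofReal (H.μ i) * ENNReal.ofReal b +
          ∑ j, ENNReal.ofReal (H.K i j) * ENNReal.ofReal (H.N j ω b) := by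
        gcongr with j
        exact (lintegral_Ioc_lintegral_Ioo_sub_le (H.φ_meas i j).ennreal_ofReal b).trans
          (by rw [hK j]; gcongr; exact hN j)

theorem lam_nonneg (i : Fin d) (t : ℝ) (ω : Ω) : 0 ≤ H.lam i t ω :=
  add_nonneg (H.μ_nonneg i) <| Finset.sum_nonneg fun j _ =>
    integral_nonneg fun _ => H.φ_nonneg i j _

theorem integrableOn_lam (hφ : ∀ i j, IntegrableOn (H.φ i j) (Ioi 0))
    (i : Fin d) (ω : Ω) (b : ℝ) :
    IntegrableOn (fun t => H.lam i t ω) (Ioc 0 b) := by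
  refine ⟨(H.measurable_lam i ω).aestronglyMeasurable, ?_⟩
  rw [hasFiniteIntegral_iff_ofReal (ae_of_all _ fun t => H.lam_nonneg i t ω)]
  refine (H.lintegral_lam_le hφ i ω b).trans_lt ?_
  simp [ENNReal.mul_lt_top, ENNReal.sum_lt_top]

theorem integral_lam_le (hφ : ∀ i j, IntegrableOn (H.φ i j) (Ioi 0))
    (i : Fin d) (ω : Ω) {b : ℝ} (hb : 0 ≤ b) :
    ∫ t in Ioc 0 b, H.lam i t ω ≤ H.μ i * b + ∑ j, H.K i j * H.N j ω b := by
  have hKN : ∀ j, 0 ≤ H.K i j * H.N j ω b := fun j =>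
    mul_nonneg (H.K_nonneg i j) (H.N_nonneg j ω b)
  rw [← ENNReal.ofReal_le_ofReal_iff
      (add_nonneg (mul_nonneg (H.μ_nonneg i) hb) (Finset.sum_nonneg fun j _ => hKN j)),
    ofReal_integral_eq_lintegral_ofReal (H.integrableOn_lam hφ i ω b)
      (ae_of_all _ fun t => H.lam_nonneg i t ω),
    ENNReal.ofReal_add (mul_nonneg (H.μ_nonneg i) hb) (Finset.sum_nonneg fun j _ => hKN j),
    ENNReal.ofReal_mul (H.μ_nonneg i), ENNReal.ofReal_sum_of_nonneg fun j _ => hKN j]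
  simp_rw [ENNReal.ofReal_mul (H.K_nonneg i _)]
  exact H.lintegral_lam_le hφ i ω b

theorem continuous_compensator (hφ : ∀ i j, IntegrableOn (H.φ i j) (Ioi 0))
    (i : Fin d) (ω : Ω) :
    Continuous fun t => ∫ s in Ioc 0 t, H.lam i s ω := by
  refine continuous_iff_continuousAt.mpr fun t => ?_
  -- on `Icc a b` with `a ≤ 0`, the compensator is the primitive of `λ` extended by zero
  set a := -|t| - 1
  set b := |t| + 1
  have heq : ∀ x, ∫ s in Ioc 0 x, H.lam i s ω =
      ∫ s in Ioc a x, (Ioi 0).indicator (H.lam i · ω) s := fun x => by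
    rw [integral_indicator measurableSet_Ioi, Measure.restrict_restrict measurableSet_Ioi,
      inter_comm, Ioc_inter_Ioi, max_eq_right (by linarith [abs_nonneg t])]
  have hint : IntegrableOn ((Ioi 0).indicator (H.lam i · ω)) (Icc a b) :=
    (integrableOn_indicator_iff measurableSet_Ioi).mpr <|
      (H.integrableOn_lam hφ i ω b).mono_set fun x hx => ⟨hx.1, hx.2.2⟩
  simp_rw [heq]
  exact (intervalIntegral.continuousOn_primitive hint).continuousAt
    (Icc_mem_nhds (by linarith [neg_abs_le t]) (by linarith [le_abs_self t]))

theorem continuousWithinAt_M (hφ : ∀ i j, IntegrableOn (H.φ i j) (Ioi 0))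
    (i : Fin d) (ω : Ω) (t : ℝ) :
    ContinuousWithinAt (fun s => H.M i s ω) (Ici t) t :=
  ((H.N i ω).right_continuous t).sub (H.continuous_compensator hφ i ω).continuousWithinAt

end Pathwise

/-- The first time the total number of points reaches `c`, capped at time `c` so that it is
bounded and the infimum is over a nonempty set. -/
def hitTime (c : ℝ) (ω : Ω) : ℝ := sInf ({s | c ≤ ∑ i, H.N i ω s} ∪ {c})

section HitTime

variable {H} {c : ℝ}

theorem nonneg_of_mem_hitTime_set (hc : 0 < c) (ω : Ω) {s : ℝ}
    (hs : s ∈ {s | c ≤ ∑ i, H.N i ω s} ∪ {c}) : 0 ≤ s := by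
  rcases hs with hs | rfl
  · by_contra! hneg
    have hzero : ∑ i, H.N i ω s = 0 := Finset.sum_eq_zero fun i _ => H.N_zero i ω s hneg.le
    exact hc.not_ge (hzero ▸ hs)
  · exact hc.le

theorem bddBelow_hitTime_set (hc : 0 < c) (ω : Ω) :
    BddBelow ({s | c ≤ ∑ i, H.N i ω s} ∪ {c}) :=
  ⟨0, fun _ => nonneg_of_mem_hitTime_set hc ω⟩

theorem hitTime_nonneg (hc : 0 < c) (ω : Ω) : 0 ≤ H.hitTime c ω :=
  le_csInf ⟨c, Or.inr rfl⟩ fun _ => nonneg_of_mem_hitTime_set hc ω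

theorem hitTime_le (hc : 0 < c) (ω : Ω) : H.hitTime c ω ≤ c :=
  csInf_le (bddBelow_hitTime_set hc ω) (Or.inr rfl)

theorem le_hitTime {ω : Ω} {t : ℝ} (htc : t ≤ c) (hN : ∑ i, H.N i ω t < c) :
    t ≤ H.hitTime c ω := by
  refine le_csInf ⟨c, Or.inr rfl⟩ fun s hs => ?_
  rcases hs with hs | rfl
  · by_contra! hst
    exact (hN.trans_le hs).not_ge (Finset.sum_le_sum fun i _ => (H.N i ω).mono hst.le)
  · exact htc

theorem eventually_le_hitTime (ω : Ω) (t : ℝ) :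
    ∀ᶠ n : ℕ in atTop, t ≤ H.hitTime (n + 1) ω := by
  obtain ⟨n₀, hn₀⟩ := exists_nat_gt (max t (∑ i, H.N i ω t))
  filter_upwards [eventually_ge_atTop n₀] with n hn
  have hlt : max t (∑ i, H.N i ω t) < n + 1 := hn₀.trans_le (by exact_mod_cast hn.trans n.le_succ)
  exact le_hitTime (max_lt_iff.mp hlt).1.le (max_lt_iff.mp hlt).2

theorem N_hitTime_le (hc : 0 < c) (j : Fin d) (ω : Ω) : H.N j ω (H.hitTime c ω) ≤ c + 1 := by
  refine ((H.N j ω).le_add_toReal_measure_singleton fun s hs => ?_).trans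
    (add_le_add le_rfl (ENNReal.toReal_le_of_le_ofReal zero_le_one
      (ENNReal.ofReal_one ▸ H.jump_le_one j ω _)))
  have hsum : ∑ i, H.N i ω s < c := by
    by_contra! hcs
    exact notMem_of_lt_csInf hs (bddBelow_hitTime_set hc ω) (Or.inl hcs)
  exact (Finset.single_le_sum (fun i _ => H.N_nonneg i ω s) (Finset.mem_univ j)).trans hsum.le

theorem isStoppingTime_hitTime (hc : 0 < c) :
    IsStoppingTime H.F fun ω => (H.hitTime c ω : WithTop ℝ) := by
  intro t
  simp only [WithTop.coe_le_coe]
  rcases le_or_gt c t with hct | htc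
  · convert MeasurableSet.univ
    exact eq_univ_of_forall fun ω => (hitTime_le hc ω).trans hct
  have heq : {ω | H.hitTime c ω ≤ t} = {ω | c ≤ ∑ i, H.N i ω t} := by
    ext ω
    refine ⟨fun hle => ?_, fun hN => csInf_le (bddBelow_hitTime_set hc ω) (Or.inl hN)⟩
    have hrc : Tendsto (fun s => ∑ i, H.N i ω s) (𝓝[>] t) (𝓝 (∑ i, H.N i ω t)) :=
      tendsto_finsetSum _ fun i _ =>
        ((H.N i ω).right_continuous t).tendsto.mono_left (nhdsWithin_mono _ Ioi_subset_Ici_self)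
    refine ge_of_tendsto hrc ?_
    filter_upwards [Ioo_mem_nhdsGT htc] with s hs
    obtain ⟨x, hx, hxs⟩ :=
      (csInf_lt_iff (bddBelow_hitTime_set hc ω) ⟨c, Or.inr rfl⟩).mp (hle.trans_lt hs.1)
    rcases hx with hx | rfl
    · exact hx.trans (Finset.sum_le_sum fun i _ => (H.N i ω).mono hxs.le)
    · exact absurd hxs (not_lt.mpr hs.2.le)
  rw [heq]
  exact measurableSet_le measurable_const (Finset.measurable_sum _ fun i _ => H.adapted i t)

end HitTime

theorem measurable_N (i : Fin d) (t : ℝ) : Measurable fun ω => H.N i ω t :=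
  (H.adapted i t).mono (H.F.le t) le_rfl

theorem measurable_N_comp (i : Fin d) {σ : Ω → ℝ} (hσ : Measurable σ) :
    Measurable fun ω => H.N i ω (σ ω) :=
  measurable_comp_of_continuousWithinAt (X := fun t ω => H.N i ω t) (H.measurable_N i)
    (fun ω t => (H.N i ω).right_continuous t) hσ

theorem integral_M_eq_zero (hH : H.IsHawkes) (i : Fin d) {t : ℝ} (ht : 0 ≤ t) :
    ∫ ω, H.M i t ω ∂H.P = 0 := by
  have := H.isProb
  have hM0 : H.M i 0 = 0 := funext fun ω => by simp [M, H.N_zero i ω 0 le_rfl]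
  rw [← integral_condExp (H.F.le 0), integral_congr_ae ((hH i).2 0 t ht), hM0,
    Pi.zero_def, integral_zero]

theorem integral_N_comp_le (hH : H.IsHawkes) (hφ : ∀ i j, IntegrableOn (H.φ i j) (Ioi 0))
    {σ : Ω → ℝ} (hσ : IsStoppingTime H.F fun ω => (σ ω : WithTop ℝ)) (hσ0 : ∀ ω, 0 ≤ σ ω)
    {B : ℝ} (hσB : ∀ ω, σ ω ≤ B) (hσint : Integrable σ H.P)
    (hNσ : ∀ j, Integrable (fun ω => H.N j ω (σ ω)) H.P) (i : Fin d) :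
    ∫ ω, H.N i ω (σ ω) ∂H.P ≤
      H.μ i * ∫ ω, σ ω ∂H.P + ∑ j, H.K i j * ∫ ω, H.N j ω (σ ω) ∂H.P := by
  have := H.isProb
  obtain ⟨hMint, hMσ⟩ := (hH i).integrable_comp_and_integral_comp_eq
    (H.continuousWithinAt_M hφ i) hσ fun ω => (hσB ω).trans (le_max_left B 0)
  have hCint : Integrable (fun ω => ∫ s in Ioc 0 (σ ω), H.lam i s ω) H.P :=
    ((hNσ i).sub hMint).congr (ae_of_all _ fun ω => by simp [M])
  calc ∫ ω, H.N i ω (σ ω) ∂H.P = ∫ ω, (∫ s in Ioc 0 (σ ω), H.lam i s ω) ∂H.P := by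
        rw [← sub_eq_zero, ← integral_sub (hNσ i) hCint]
        exact hMσ.trans (H.integral_M_eq_zero hH i (le_max_right B 0))
    _ ≤ ∫ ω, (H.μ i * σ ω + ∑ j, H.K i j * H.N j ω (σ ω)) ∂H.P :=
        integral_mono hCint ((hσint.const_mul _).add (integrable_finsetSum _ fun j _ =>
          (hNσ j).const_mul _)) fun ω => H.integral_lam_le hφ i ω (hσ0 ω)
    _ = H.μ i * ∫ ω, σ ω ∂H.P + ∑ j, H.K i j * ∫ ω, H.N j ω (σ ω) ∂H.P := by
        rw [integral_add (hσint.const_mul _) (integrable_finsetSum _ fun j _ =>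
          (hNσ j).const_mul _), integral_const_mul, integral_finsetSum _ fun j _ =>
          (hNσ j).const_mul _]
        simp_rw [integral_const_mul]

theorem lintegral_N_comp_le (hH : H.IsHawkes) (hA1 : H.A1)
    {σ : Ω → ℝ} (hσ : IsStoppingTime H.F fun ω => (σ ω : WithTop ℝ)) (hσ0 : ∀ ω, 0 ≤ σ ω)
    {B : ℝ} (hσB : ∀ ω, σ ω ≤ B) {C : ℝ} (hNC : ∀ j ω, H.N j ω (σ ω) ≤ C) (i : Fin d) :
    ∫⁻ ω, ENNReal.ofReal (H.N i ω (σ ω)) ∂H.P ≤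
      ENNReal.ofReal ((H.Gam *ᵥ H.μ) i) * ∫⁻ ω, ENNReal.ofReal (σ ω) ∂H.P := by
  have := H.isProb
  have hσint : Integrable σ H.P :=
    Integrable.of_bound hσ.measurable_real.aestronglyMeasurable B
      (ae_of_all _ fun ω => (Real.norm_of_nonneg (hσ0 ω)).trans_le (hσB ω))
  have hNσ : ∀ j, Integrable (fun ω => H.N j ω (σ ω)) H.P := fun j =>
    Integrable.of_bound (H.measurable_N_comp j hσ.measurable_real).aestronglyMeasurable C
      (ae_of_all _ fun ω => (Real.norm_of_nonneg (H.N_nonneg j ω _)).trans_le (hNC j ω))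
  have hrenewal := Matrix.le_inv_one_sub_mulVec H.K_nonneg hA1.2
    (x := fun j => ∫ ω, H.N j ω (σ ω) ∂H.P) (a := (∫ ω, σ ω ∂H.P) • H.μ) fun j =>
      (H.integral_N_comp_le hH hA1.1 hσ hσ0 hσB hσint hNσ j).trans_eq (by
        simp [Matrix.mulVec, dotProduct, mul_comm])
  rw [Matrix.mulVec_smul] at hrenewal
  calc ∫⁻ ω, ENNReal.ofReal (H.N i ω (σ ω)) ∂H.P
      = ENNReal.ofReal (∫ ω, H.N i ω (σ ω) ∂H.P) :=
        (ofReal_integral_eq_lintegral_ofReal (hNσ i) (ae_of_all _ fun ω => H.N_nonneg i ω _)).symm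
    _ ≤ ENNReal.ofReal ((H.Gam *ᵥ H.μ) i * ∫ ω, σ ω ∂H.P) :=
        ENNReal.ofReal_le_ofReal ((hrenewal i).trans_eq (mul_comm _ _))
    _ = ENNReal.ofReal ((H.Gam *ᵥ H.μ) i) * ∫⁻ ω, ENNReal.ofReal (σ ω) ∂H.P := by
        rw [ENNReal.ofReal_mul' (integral_nonneg hσ0),
          ofReal_integral_eq_lintegral_ofReal hσint (ae_of_all _ hσ0)]

theorem lintegral_N_min_hitTime_le (hH : H.IsHawkes) (hA1 : H.A1) {S : Ω → ℝ}
    (hS : IsStoppingTime H.F fun ω => (S ω : WithTop ℝ)) (hS0 : ∀ ω, 0 ≤ S ω) {c : ℝ}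
    (hc : 0 < c) (i : Fin d) :
    ∫⁻ ω, ENNReal.ofReal (H.N i ω (min (S ω) (H.hitTime c ω))) ∂H.P ≤
      ENNReal.ofReal ((H.Gam *ᵥ H.μ) i) * ∫⁻ ω, ENNReal.ofReal (S ω) ∂H.P := by
  refine (H.lintegral_N_comp_le hH hA1
    (by simpa only [WithTop.coe_min] using hS.min (isStoppingTime_hitTime hc))
    (fun ω => le_min (hS0 ω) (hitTime_nonneg hc ω))
    (fun ω => (min_le_right _ _).trans (hitTime_le hc ω))
    (fun j ω => ((H.N j ω).mono (min_le_right _ _)).trans (N_hitTime_le hc j ω)) i).trans ?_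
  gcongr with ω
  exact min_le_left _ _

end HawkesData

theorem hawkes_stopping_time_bound {d : ℕ} {Ω : Type*} [mΩ : MeasurableSpace Ω]
    (H : HawkesData d Ω) (hH : H.IsHawkes) (hA1 : H.A1)
    (S : Ω → ℝ) (hS : IsStoppingTime H.F fun ω => (S ω : WithTop ℝ)) (hS0 : ∀ ω, 0 ≤ S ω) :
    ∀ i, ∫⁻ ω, ENNReal.ofReal (H.N i ω (S ω)) ∂H.P
      ≤ ENNReal.ofReal (H.Gam.mulVec H.μ i) * ∫⁻ ω, ENNReal.ofReal (S ω) ∂H.P := by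
  intro i
  have hmeas : ∀ n : ℕ, Measurable fun ω => min (S ω) (H.hitTime (n + 1) ω) := fun n =>
    hS.measurable_real.min (HawkesData.isStoppingTime_hitTime n.cast_add_one_pos).measurable_real
  have hlim : ∀ ω, ∀ᶠ n : ℕ in atTop, min (S ω) (H.hitTime (n + 1) ω) = S ω := fun ω =>
    (H.eventually_le_hitTime ω (S ω)).mono fun n hn => min_eq_left hn
  exact lintegral_le_of_tendsto
    (fun n => (H.measurable_N_comp i (hmeas n)).ennreal_ofReal.aemeasurable)
    (ae_of_all _ fun ω => tendsto_const_nhds.congr' <| (hlim ω).mono fun n hn => by simp only [hn])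
    fun n => H.lintegral_N_min_hitTime_le hH hA1 hS hS0 n.cast_add_one_pos i
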